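/- arXiv:1909.04212 — 2 statements merged into one kernel-verified Lean document; each statement's English description precedes it below -/
import Mathlib

section
/- Let W₀, W₁, W₂ be complex Hilbert spaces with real structures, L₀₁ ⊆ W₀ ⊕ (−W₁) and L₁₂ ⊆ W₁ ⊕ (−W₂) Lagrangians. Set W = W₀ ⊕ (−W₁) ⊕ W₁ ⊕ (−W₂), L = L₀₁ ⊕ L₁₂, let σ: W → W₁ be σ(v₀, v₁, v₁', v₂) = v₁ − v₁', and K = {w ∈ W₁ : (0,w) ∈ L₀₁ ∧ (w,0) ∈ L₁₂}. Then σ(L)^⊥ = K̄, the conjugate of K in W₁. -/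
noncomputable section

/-- A real structure on a complex inner product space: an anti-unitary involution `v ↦ v̄`. -/
structure RealStructure (W : Type*) [NormedAddCommGroup W] [InnerProductSpace ℂ W] where
  conj : W → W
  map_add : ∀ v w : W, conj (v + w) = conj v + conj w
  map_smul : ∀ (c : ℂ) (v : W), conj (c • v) = (starRingEnd ℂ) c • conj v
  invol : ∀ v : W, conj (conj v) = v
  inner_conj : ∀ v w : W, (inner ℂ (conj v) (conj w) : ℂ) = (starRingEnd ℂ) (inner ℂ v w : ℂ)

/-- The real structure of `A ⊕ (−B)`. -/
def pairConj {A B : Type*} [NormedAddCommGroup A] [InnerProductSpace ℂ A]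
    [NormedAddCommGroup B] [InnerProductSpace ℂ B]
    (rA : RealStructure A) (rB : RealStructure B) : A × B → A × B :=
  fun p => (rA.conj p.1, -rB.conj p.2)

/-- The Hermitian inner product of `A ⊕ B`. -/
def pairInner {A B : Type*} [NormedAddCommGroup A] [InnerProductSpace ℂ A]
    [NormedAddCommGroup B] [InnerProductSpace ℂ B] (x y : A × B) : ℂ :=
  (inner ℂ x.1 y.1 : ℂ) + (inner ℂ x.2 y.2 : ℂ)

/-- A Lagrangian `L ⊆ A ⊕ (−B)`. -/
def IsLagrangianPair {A B : Type*} [NormedAddCommGroup A] [InnerProductSpace ℂ A]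
    [NormedAddCommGroup B] [InnerProductSpace ℂ B]
    (rA : RealStructure A) (rB : RealStructure B) (L : Submodule ℂ (A × B)) : Prop :=
  pairConj rA rB '' (L : Set (A × B)) = {y : A × B | ∀ x ∈ L, pairInner x y = 0}

/-!
The Lagrangian condition says that `pairConj` maps `L` onto its annihilator; since `pairConj`
is an involution, `p̄ ∈ L` exactly when `p` annihilates `L`. Testing `σ(L)` separately against
`L₀₁ ⊕ 0` and `0 ⊕ L₁₂`, a vector `u` is orthogonal to `σ(L)` iff `(0, -u)` annihilates `L₀₁`
and `(u, 0)` annihilates `L₁₂`, i.e. iff `(0, ū) ∈ L₀₁` and `(ū, 0) ∈ L₁₂`, i.e. iff `ū ∈ K`.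
-/

namespace RealStructure

variable {W : Type*} [NormedAddCommGroup W] [InnerProductSpace ℂ W] (r : RealStructure W)

lemma involutive_conj : Function.Involutive r.conj := r.invol

lemma conj_zero : r.conj 0 = 0 := by
  simpa using r.map_smul 0 0

lemma conj_neg (v : W) : r.conj (-v) = -r.conj v := by
  simpa using r.map_smul (-1) v

end RealStructure

section Lagrangian

variable {A B : Type*} [NormedAddCommGroup A] [InnerProductSpace ℂ A]
  [NormedAddCommGroup B] [InnerProductSpace ℂ B]
  {rA : RealStructure A} {rB : RealStructure B} {L : Submodule ℂ (A × B)}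

lemma involutive_pairConj (rA : RealStructure A) (rB : RealStructure B) :
    Function.Involutive (pairConj rA rB) := fun p => by
  simp only [pairConj, rB.conj_neg, neg_neg, rA.invol, rB.invol]

lemma IsLagrangianPair.pairConj_mem_iff (h : IsLagrangianPair rA rB L) (p : A × B) :
    pairConj rA rB p ∈ L ↔ ∀ x ∈ L, pairInner x p = 0 := by
  have hinv := involutive_pairConj rA rB
  rw [← SetLike.mem_coe, ← Set.mem_image_iff_of_inverse hinv.leftInverse hinv.rightInverse, h]
  rfl

lemma IsLagrangianPair.zero_conj_mem_iff (h : IsLagrangianPair rA rB L) (u : B) :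
    ((0 : A), rB.conj u) ∈ L ↔ ∀ x ∈ L, (inner ℂ x.2 u : ℂ) = 0 := by
  have hp : pairConj rA rB (0, -u) = (0, rB.conj u) := by
    simp only [pairConj, rA.conj_zero, rB.conj_neg, neg_neg]
  rw [← hp, h.pairConj_mem_iff]
  simp only [pairInner, inner_zero_right, inner_neg_right, zero_add, neg_eq_zero]

lemma IsLagrangianPair.conj_zero_mem_iff (h : IsLagrangianPair rA rB L) (u : A) :
    (rA.conj u, (0 : B)) ∈ L ↔ ∀ x ∈ L, (inner ℂ x.1 u : ℂ) = 0 := by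
  have hp : pairConj rA rB (u, 0) = (rA.conj u, 0) := by
    simp only [pairConj, rB.conj_zero, neg_zero]
  rw [← hp, h.pairConj_mem_iff]
  simp only [pairInner, inner_zero_right, add_zero]

end Lagrangian

lemma forall_inner_sub_left_eq_zero_iff {𝕜 E : Type*} [RCLike 𝕜] [NormedAddCommGroup E]
    [InnerProductSpace 𝕜 E] {S T : Set E} (hS : 0 ∈ S) (hT : 0 ∈ T) (u : E) :
    (∀ s ∈ S, ∀ t ∈ T, (inner 𝕜 (s - t) u : 𝕜) = 0) ↔
      (∀ s ∈ S, (inner 𝕜 s u : 𝕜) = 0) ∧ ∀ t ∈ T, (inner 𝕜 t u : 𝕜) = 0 := by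
  refine ⟨fun h => ⟨fun s hs => by simpa using h s hs 0 hT, fun t ht => by
    simpa using h 0 hS t ht⟩, fun ⟨hS', hT'⟩ s hs t ht => ?_⟩
  rw [inner_sub_left, hS' s hs, hT' t ht, sub_zero]

theorem orthogonal_of_sigma_image_eq_conj_K_general
    {W₀ W₁ W₂ : Type*}
    [NormedAddCommGroup W₀] [InnerProductSpace ℂ W₀]
    [NormedAddCommGroup W₁] [InnerProductSpace ℂ W₁]
    [NormedAddCommGroup W₂] [InnerProductSpace ℂ W₂]
    (r₀ : RealStructure W₀) (r₁ : RealStructure W₁) (r₂ : RealStructure W₂)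
    (L01 : Submodule ℂ (W₀ × W₁)) (L12 : Submodule ℂ (W₁ × W₂))
    (h01 : IsLagrangianPair r₀ r₁ L01) (h12 : IsLagrangianPair r₁ r₂ L12) :
    {u : W₁ | ∀ x ∈ L01, ∀ y ∈ L12, (inner ℂ (x.2 - y.1) u : ℂ) = 0} =
      r₁.conj '' {w : W₁ | (0, w) ∈ L01 ∧ (w, 0) ∈ L12} := by
  rw [r₁.involutive_conj.image_eq_preimage_symm]
  ext u
  simp only [Set.mem_ofPred_eq, Set.mem_preimage, h01.zero_conj_mem_iff, h12.conj_zero_mem_iff]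
  simpa only [Set.forall_mem_image, SetLike.mem_coe] using
    forall_inner_sub_left_eq_zero_iff (𝕜 := ℂ)
    (S := Prod.snd '' (L01 : Set (W₀ × W₁))) (T := Prod.fst '' (L12 : Set (W₁ × W₂)))
    ⟨0, L01.zero_mem, rfl⟩ ⟨0, L12.zero_mem, rfl⟩ u

/-- With `L = L₀₁ ⊕ L₁₂` and `σ(v₀,v₁,v₁',v₂) = v₁ − v₁'`, the orthogonal complement
(in `W₁`) of the image `σ(L)` equals `K̄`, the conjugate of the space
`K = {w ∈ W₁ : (0,w) ∈ L₀₁ ∧ (w,0) ∈ L₁₂}`. -/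
theorem orthogonal_of_sigma_image_eq_conj_K
    {W₀ W₁ W₂ : Type*}
    [NormedAddCommGroup W₀] [InnerProductSpace ℂ W₀] [CompleteSpace W₀]
    [NormedAddCommGroup W₁] [InnerProductSpace ℂ W₁] [CompleteSpace W₁]
    [NormedAddCommGroup W₂] [InnerProductSpace ℂ W₂] [CompleteSpace W₂]
    (r₀ : RealStructure W₀) (r₁ : RealStructure W₁) (r₂ : RealStructure W₂)
    (L01 : Submodule ℂ (W₀ × W₁)) (L12 : Submodule ℂ (W₁ × W₂))
    (h01 : IsLagrangianPair r₀ r₁ L01) (h12 : IsLagrangianPair r₁ r₂ L12) :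
    {u : W₁ | ∀ x ∈ L01, ∀ y ∈ L12, (inner ℂ (x.2 - y.1) u : ℂ) = 0} =
      r₁.conj '' {w : W₁ | (0, w) ∈ L01 ∧ (w, 0) ∈ L12} :=
  orthogonal_of_sigma_image_eq_conj_K_general r₀ r₁ r₂ L01 L12 h01 h12
end
end

section
/- Consider four Hilbert spaces W₀,…,W₃ with real structures and Lagrangians L₀₁, L₁₂, L₂₃; define K_{ijk} = {u ∈ W_j : (0,u) ∈ L_{ij}, (u,0) ∈ L_{jk}} for i<j<k, all finite-dimensional, and assume all iterated compositions L_{ij} are Lagrangians. Then K₀₁₂ ⊆ K₀₁₃ and K₁₂₃ ⊆ K₀₂₃, and the relation R = L₁₂ ∩ ((K₀₁₂^⊥ ∩ K₀₁₃) ⊕ (K₁₂₃^⊥ ∩ K₀₂₃)) is the graph of a vector space isomorphism ρ₀: K₀₁₂^⊥ ∩ K₀₁₃ → K₁₂₃^⊥ ∩ K₀₂₃. -/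
noncomputable section

/-- The composition of two linear relations `L₀₁ ⊆ W₀ × W₁`, `L₁₂ ⊆ W₁ × W₂`. -/
def composeRel {W₀ W₁ W₂ : Type*} [NormedAddCommGroup W₀] [InnerProductSpace ℂ W₀]
    [NormedAddCommGroup W₁] [InnerProductSpace ℂ W₁]
    [NormedAddCommGroup W₂] [InnerProductSpace ℂ W₂]
    (L01 : Submodule ℂ (W₀ × W₁)) (L12 : Submodule ℂ (W₁ × W₂)) :
    Submodule ℂ (W₀ × W₂) where
  carrier := {p | ∃ w₁ : W₁, (p.1, w₁) ∈ L01 ∧ (w₁, p.2) ∈ L12}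
  add_mem' := by
    rintro a b ⟨w, hw1, hw2⟩ ⟨w', hw1', hw2'⟩
    exact ⟨w + w', L01.add_mem hw1 hw1', L12.add_mem hw2 hw2'⟩
  zero_mem' := ⟨0, L01.zero_mem, L12.zero_mem⟩
  smul_mem' := by
    rintro c a ⟨w, hw1, hw2⟩
    exact ⟨c • w, L01.smul_mem c hw1, L12.smul_mem c hw2⟩

/-- The space `K = {u : (0,u) ∈ L_A ∧ (u,0) ∈ L_B}` measuring the overlap of two
composable relations. -/
def Kspace {A B C : Type*} [NormedAddCommGroup A] [InnerProductSpace ℂ A]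
    [NormedAddCommGroup B] [InnerProductSpace ℂ B]
    [NormedAddCommGroup C] [InnerProductSpace ℂ C]
    (LA : Submodule ℂ (A × B)) (LB : Submodule ℂ (B × C)) : Submodule ℂ B where
  carrier := {u | (0, u) ∈ LA ∧ (u, 0) ∈ LB}
  add_mem' := by
    rintro u v ⟨hu1, hu2⟩ ⟨hv1, hv2⟩
    exact ⟨by simpa using LA.add_mem hu1 hv1, by simpa using LB.add_mem hu2 hv2⟩
  zero_mem' := ⟨LA.zero_mem, LB.zero_mem⟩
  smul_mem' := by
    rintro c u ⟨hu1, hu2⟩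
    exact ⟨by simpa using LA.smul_mem c hu1, by simpa using LB.smul_mem c hu2⟩

variable {W₀ W₁ W₂ W₃ : Type*}
  [NormedAddCommGroup W₀] [InnerProductSpace ℂ W₀] [CompleteSpace W₀]
  [NormedAddCommGroup W₁] [InnerProductSpace ℂ W₁] [CompleteSpace W₁]
  [NormedAddCommGroup W₂] [InnerProductSpace ℂ W₂] [CompleteSpace W₂]
  [NormedAddCommGroup W₃] [InnerProductSpace ℂ W₃] [CompleteSpace W₃]

/-- Abstract lemma: a relation `R ⊆ A × B` which relates every element of `E` to some
element of `F` and vice versa, and whose kernels on `E` and `F` are trivial, is the graph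
of a linear equivalence `E ≃ F`. -/
theorem graph_equiv_of_rel {A B : Type*} [AddCommGroup A] [Module ℂ A]
    [AddCommGroup B] [Module ℂ B]
    (R : Submodule ℂ (A × B)) (E : Submodule ℂ A) (F : Submodule ℂ B)
    (hEF : ∀ x ∈ E, ∃ y ∈ F, (x, y) ∈ R)
    (hFE : ∀ y ∈ F, ∃ x ∈ E, (x, y) ∈ R)
    (hE0 : ∀ x ∈ E, ((x : A), (0 : B)) ∈ R → x = 0)
    (hF0 : ∀ y ∈ F, ((0 : A), (y : B)) ∈ R → y = 0) :
    ∃ ρ : E ≃ₗ[ℂ] F, ∀ (x : E) (y : F), ((x : A), (y : B)) ∈ R ↔ ρ x = y := by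
  classical
  choose f hfF hfR using hEF
  choose g hgE hgR using hFE
  have huF : ∀ x : A, ∀ y ∈ F, ∀ y' ∈ F, (x, y) ∈ R → (x, y') ∈ R → y = y' := by
    intro x y hy y' hy' h h'
    have hz : ((0 : A), y - y') ∈ R := by simpa using R.sub_mem h h'
    have := hF0 (y - y') (F.sub_mem hy hy') hz
    exact sub_eq_zero.mp this
  have huE : ∀ y : B, ∀ x ∈ E, ∀ x' ∈ E, (x, y) ∈ R → (x', y) ∈ R → x = x' := by
    intro y x hx x' hx' h h'
    have hz : (x - x', (0 : B)) ∈ R := by simpa using R.sub_mem h h'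
    have := hE0 (x - x') (E.sub_mem hx hx') hz
    exact sub_eq_zero.mp this
  refine ⟨{ toFun := fun x => ⟨f x x.2, hfF x x.2⟩
            map_add' := ?_
            map_smul' := ?_
            invFun := fun y => ⟨g y y.2, hgE y y.2⟩
            left_inv := ?_
            right_inv := ?_ }, ?_⟩
  · intro x x'
    apply Subtype.ext
    refine huF ((x : A) + x') _ (hfF _ _) _
      (F.add_mem (hfF x x.2) (hfF x' x'.2)) (hfR _ _) ?_
    simpa using R.add_mem (hfR x x.2) (hfR x' x'.2)
  · intro c x
    apply Subtype.ext
    refine huF (c • (x : A)) _ (hfF _ _) _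
      (F.smul_mem c (hfF x x.2)) (hfR _ _) ?_
    simpa using R.smul_mem c (hfR x x.2)
  · intro x
    apply Subtype.ext
    exact huE (f x x.2) _ (hgE _ _) _ x.2 (hgR _ _) (hfR x x.2)
  · intro y
    apply Subtype.ext
    exact huF (g y y.2) _ (hfF _ _) _ y.2 (hfR _ _) (hgR y y.2)
  · intro x y
    constructor
    · intro h
      apply Subtype.ext
      exact huF (x : A) _ (hfF x x.2) _ y.2 (hfR x x.2) h
    · rintro rfl
      exact hfR x x.2

/-- Given Lagrangians `L₀₁, L₁₂, L₂₃` whose iterated compositions are again Lagrangians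
and whose overlap spaces `K_{ijk}` are finite-dimensional, one has `K₀₁₂ ⊆ K₀₁₃` and
`K₁₂₃ ⊆ K₀₂₃`, and the relation `R = L₁₂ ∩ ((K₀₁₂^⊥ ∩ K₀₁₃) ⊕ (K₁₂₃^⊥ ∩ K₀₂₃))` is the
graph of a linear isomorphism `ρ₀ : K₀₁₂^⊥ ∩ K₀₁₃ → K₁₂₃^⊥ ∩ K₀₂₃`. -/
theorem overlap_spaces_development_isomorphism
    (r₀ : RealStructure W₀) (r₁ : RealStructure W₁)
    (r₂ : RealStructure W₂) (r₃ : RealStructure W₃)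
    (L01 : Submodule ℂ (W₀ × W₁)) (L12 : Submodule ℂ (W₁ × W₂))
    (L23 : Submodule ℂ (W₂ × W₃))
    (h01 : IsLagrangianPair r₀ r₁ L01) (h12 : IsLagrangianPair r₁ r₂ L12)
    (h23 : IsLagrangianPair r₂ r₃ L23)
    (h02 : IsLagrangianPair r₀ r₂ (composeRel L01 L12))
    (h13 : IsLagrangianPair r₁ r₃ (composeRel L12 L23))
    (h03 : IsLagrangianPair r₀ r₃ (composeRel (composeRel L01 L12) L23))
    (hK012 : FiniteDimensional ℂ ↥(Kspace L01 L12))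
    (hK013 : FiniteDimensional ℂ ↥(Kspace L01 (composeRel L12 L23)))
    (hK123 : FiniteDimensional ℂ ↥(Kspace L12 L23))
    (hK023 : FiniteDimensional ℂ ↥(Kspace (composeRel L01 L12) L23)) :
    Kspace L01 L12 ≤ Kspace L01 (composeRel L12 L23) ∧
    Kspace L12 L23 ≤ Kspace (composeRel L01 L12) L23 ∧
    ∃ ρ₀ : ↥((Kspace L01 L12)ᗮ ⊓ Kspace L01 (composeRel L12 L23)) ≃ₗ[ℂ]
        ↥((Kspace L12 L23)ᗮ ⊓ Kspace (composeRel L01 L12) L23),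
      ∀ (x : ↥((Kspace L01 L12)ᗮ ⊓ Kspace L01 (composeRel L12 L23)))
        (y : ↥((Kspace L12 L23)ᗮ ⊓ Kspace (composeRel L01 L12) L23)),
        ((x : W₁), (y : W₂)) ∈ L12 ↔ ρ₀ x = y := by
  set K012 := Kspace L01 L12 with hK012def
  set K013 := Kspace L01 (composeRel L12 L23) with hK013def
  set K123 := Kspace L12 L23 with hK123def
  set K023 := Kspace (composeRel L01 L12) L23 with hK023def
  have memK012 : ∀ u : W₁, u ∈ K012 ↔ (0, u) ∈ L01 ∧ (u, 0) ∈ L12 := fun _ => Iff.rfl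
  have memK013 : ∀ u : W₁, u ∈ K013 ↔ (0, u) ∈ L01 ∧ (u, 0) ∈ composeRel L12 L23 :=
    fun _ => Iff.rfl
  have memK123 : ∀ u : W₂, u ∈ K123 ↔ (0, u) ∈ L12 ∧ (u, 0) ∈ L23 := fun _ => Iff.rfl
  have memK023 : ∀ u : W₂, u ∈ K023 ↔ (0, u) ∈ composeRel L01 L12 ∧ (u, 0) ∈ L23 :=
    fun _ => Iff.rfl
  have h1 : K012 ≤ K013 := by
    intro u hu
    obtain ⟨hu1, hu2⟩ := (memK012 u).mp hu
    exact (memK013 u).mpr ⟨hu1, ⟨0, by simpa using hu2, L23.zero_mem⟩⟩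
  have h2 : K123 ≤ K023 := by
    intro u hu
    obtain ⟨hu1, hu2⟩ := (memK123 u).mp hu
    exact (memK023 u).mpr ⟨⟨0, L01.zero_mem, by simpa using hu1⟩, hu2⟩
  refine ⟨h1, h2, ?_⟩
  set E := K012ᗮ ⊓ K013
  set F := K123ᗮ ⊓ K023
  apply graph_equiv_of_rel L12 E F
  · -- hEF
    intro x hx
    obtain ⟨hxperp, hx013⟩ := hx
    obtain ⟨hx1, hx2⟩ := (memK013 x).mp hx013
    obtain ⟨y₀, hy₀1, hy₀2⟩ := hx2
    obtain ⟨k, hk, z, hz, hsum⟩ := K123.exists_add_mem_mem_orthogonal y₀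
    obtain ⟨hk1, hk2⟩ := (memK123 k).mp hk
    have hzeq : z = y₀ - k := by rw [hsum]; abel
    have hxz : (x, z) ∈ L12 := by
      rw [hzeq]
      simpa using L12.sub_mem hy₀1 hk1
    have hz0 : (z, (0 : W₃)) ∈ L23 := by
      rw [hzeq]
      simpa using L23.sub_mem hy₀2 hk2
    exact ⟨z, ⟨hz, (memK023 z).mpr ⟨⟨x, hx1, hxz⟩, hz0⟩⟩, hxz⟩
  · -- hFE
    intro y hy
    obtain ⟨hyperp, hy023⟩ := hy
    obtain ⟨hy1, hy2⟩ := (memK023 y).mp hy023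
    obtain ⟨x₀, hx₀1, hx₀2⟩ := hy1
    obtain ⟨k, hk, z, hz, hsum⟩ := K012.exists_add_mem_mem_orthogonal x₀
    obtain ⟨hk1, hk2⟩ := (memK012 k).mp hk
    have hzeq : z = x₀ - k := by rw [hsum]; abel
    have hzy : (z, y) ∈ L12 := by
      rw [hzeq]
      simpa using L12.sub_mem hx₀2 hk2
    have hz0 : ((0 : W₀), z) ∈ L01 := by
      rw [hzeq]
      simpa using L01.sub_mem hx₀1 hk1
    exact ⟨z, ⟨hz, (memK013 z).mpr ⟨hz0, ⟨y, hzy, hy2⟩⟩⟩, hzy⟩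
  · -- hE0
    intro x hx hx0
    obtain ⟨hxperp, hx013⟩ := hx
    have hx012 : x ∈ K012 := (memK012 x).mpr ⟨((memK013 x).mp hx013).1, hx0⟩
    have := K012.orthogonal_disjoint.le_bot ⟨hx012, hxperp⟩
    simpa using this
  · -- hF0
    intro y hy hy0
    obtain ⟨hyperp, hy023⟩ := hy
    have hy123 : y ∈ K123 := (memK123 y).mpr ⟨hy0, ((memK023 y).mp hy023).2⟩
    have := K123.orthogonal_disjoint.le_bot ⟨hy123, hyperp⟩
    simpa using this
end
end
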